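/- arXiv:2212.07537 — 6 statements merged into one kernel-verified Lean document; each statement's English description precedes it below -/
import Mathlib

section
/- Let A₁,…,A_k and B₁,…,B_l be nonzero n×n real 0-1 matrices with zero diagonal such that the family A₁,…,A_k has pairwise disjoint supports and the family B₁,…,B_l has pairwise disjoint supports. Suppose there exists an n×n permutation matrix P such that the real linear span of {I, A₁, …, A_k} equals the real linear span of {I, Pᵀ B₁ P, …, Pᵀ B_l P}. Then k = l and there is a bijection σ of {1,…,k} with A_i = Pᵀ B_{σ(i)} P for every i. (This is Proposition 2.1: two homogeneous simple coupled cell networks that are ODE-equivalent are isomorphic, stated in terms of their adjacency matrices.) -/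
open Matrix

private lemma exists_entry_one {n : ℕ} (M : Matrix (Fin n) (Fin n) ℝ) (hM : M ≠ 0)
    (h01 : ∀ p q, M p q = 0 ∨ M p q = 1) : ∃ p q, M p q = 1 := by
  by_contra h
  push_neg at h
  apply hM
  ext p q
  rcases h01 p q with h0 | h1
  · simpa using h0
  · exact absurd h1 (h p q)

private lemma family_inj {n k : ℕ} (A : Fin k → Matrix (Fin n) (Fin n) ℝ)
    (hA0 : ∀ i, A i ≠ 0)
    (hA01 : ∀ i p q, A i p q = 0 ∨ A i p q = 1)
    (hAdisj : ∀ i i', i ≠ i' → ∀ p q, A i p q = 0 ∨ A i' p q = 0)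
    {i i' : Fin k} (h : A i = A i') : i = i' := by
  by_contra hne
  obtain ⟨p, q, hpq⟩ := exists_entry_one (A i) (hA0 i) (hA01 i)
  rcases hAdisj i i' hne p q with h0 | h0
  · rw [hpq] at h0; norm_num at h0
  · rw [← h] at h0; rw [hpq] at h0; norm_num at h0

private lemma rep_lemma {n l : ℕ} (p₀ : Fin n) (C : Fin l → Matrix (Fin n) (Fin n) ℝ)
    (hCdiag : ∀ j p, C j p p = 0) (M : Matrix (Fin n) (Fin n) ℝ)
    (hMdiag : ∀ p, M p p = 0)
    (hM : M ∈ Submodule.span ℝ (insert (1 : Matrix (Fin n) (Fin n) ℝ) (Set.range C))) :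
    ∃ c : Fin l → ℝ, M = ∑ j, c j • C j := by
  rw [Submodule.mem_span_insert] at hM
  obtain ⟨a, z, hz, hMz⟩ := hM
  rw [Submodule.mem_span_range_iff_exists_fun] at hz
  obtain ⟨c, hc⟩ := hz
  refine ⟨c, ?_⟩
  have hzdiag : z p₀ p₀ = 0 := by
    rw [← hc]
    simp [Matrix.sum_apply, hCdiag]
  have ha : a = 0 := by
    have h := congrArg (fun M : Matrix (Fin n) (Fin n) ℝ => M p₀ p₀) hMz
    simp only [hMdiag, Matrix.add_apply, Matrix.smul_apply, Matrix.one_apply_eq,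
      smul_eq_mul, mul_one, hzdiag, add_zero] at h
    exact h.symm
  rw [hMz, ha, zero_smul, zero_add, ← hc]

/-- Main combinatorial step. -/
private lemma key_lemma {n k l : ℕ} (A : Fin k → Matrix (Fin n) (Fin n) ℝ)
    (C : Fin l → Matrix (Fin n) (Fin n) ℝ)
    (hA0 : ∀ i, A i ≠ 0) (hC0 : ∀ j, C j ≠ 0)
    (hA01 : ∀ i p q, A i p q = 0 ∨ A i p q = 1)
    (hC01 : ∀ j p q, C j p q = 0 ∨ C j p q = 1)
    (hAdiag : ∀ i p, A i p p = 0) (hCdiag : ∀ j p, C j p p = 0)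
    (hAdisj : ∀ i i', i ≠ i' → ∀ p q, A i p q = 0 ∨ A i' p q = 0)
    (hCdisj : ∀ j j', j ≠ j' → ∀ p q, C j p q = 0 ∨ C j' p q = 0)
    (hspan : Submodule.span ℝ (insert (1 : Matrix (Fin n) (Fin n) ℝ) (Set.range A))
      = Submodule.span ℝ (insert (1 : Matrix (Fin n) (Fin n) ℝ) (Set.range C))) :
    ∀ i, ∃ j, A i = C j := by
  intro i
  obtain ⟨pi, qi, hpqi⟩ := exists_entry_one (A i) (hA0 i) (hA01 i)
  -- A i is a combination of the C's
  have hAmem : A i ∈ Submodule.span ℝ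
      (insert (1 : Matrix (Fin n) (Fin n) ℝ) (Set.range C)) := by
    rw [← hspan]
    exact Submodule.subset_span (Set.mem_insert_of_mem _ ⟨i, rfl⟩)
  obtain ⟨c, hc⟩ := rep_lemma pi C hCdiag (A i) (hAdiag i) hAmem
  -- each C j is a combination of the A's
  have hd : ∀ j, ∃ d : Fin k → ℝ, C j = ∑ i', d i' • A i' := by
    intro j
    apply rep_lemma pi A hAdiag (C j) (hCdiag j)
    rw [hspan]
    exact Submodule.subset_span (Set.mem_insert_of_mem _ ⟨j, rfl⟩)
  choose d hdd using hd
  -- entrywise sum formulas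
  have hcentry : ∀ p q, A i p q = ∑ j, c j * C j p q := by
    intro p q
    rw [hc]
    simp [Matrix.sum_apply]
  have hdentry : ∀ j p q, C j p q = ∑ i', d j i' * A i' p q := by
    intro j p q
    rw [hdd j]
    simp [Matrix.sum_apply]
  -- coefficients are 0 or 1
  have hc01 : ∀ j, c j = 0 ∨ c j = 1 := by
    intro j
    obtain ⟨p, q, hpq⟩ := exists_entry_one (C j) (hC0 j) (hC01 j)
    have : A i p q = c j := by
      rw [hcentry p q, Finset.sum_eq_single j]
      · rw [hpq, mul_one]
      · intro j' _ hne
        rcases hCdisj j' j hne p q with h0 | h0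
        · rw [h0, mul_zero]
        · rw [hpq] at h0; norm_num at h0
      · simp
    rw [← this]; exact hA01 i p q
  have hd01 : ∀ j i', d j i' = 0 ∨ d j i' = 1 := by
    intro j i'
    obtain ⟨p, q, hpq⟩ := exists_entry_one (A i') (hA0 i') (hA01 i')
    have : C j p q = d j i' := by
      rw [hdentry j p q, Finset.sum_eq_single i']
      · rw [hpq, mul_one]
      · intro i'' _ hne
        rcases hAdisj i'' i' hne p q with h0 | h0
        · rw [h0, mul_zero]
        · rw [hpq] at h0; norm_num at h0
      · simp
    rw [← this]; exact hC01 j p q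
  have hterm_nonneg : ∀ j, 0 ≤ c j * d j i := by
    intro j
    rcases hc01 j with h | h <;> rcases hd01 j i with h' | h' <;> rw [h, h'] <;> norm_num
  have hterm01 : ∀ j, c j * d j i = 0 ∨ c j * d j i = 1 := by
    intro j
    rcases hc01 j with h | h <;> rcases hd01 j i with h' | h' <;> rw [h, h'] <;> norm_num
  -- the double-sum coefficient of A i equals 1
  have hmsum : ∑ j, c j * d j i = 1 := by
    have h1 : A i pi qi = ∑ j, c j * ∑ i', d j i' * A i' pi qi := by
      rw [hcentry pi qi]
      exact Finset.sum_congr rfl fun j _ => by rw [hdentry j pi qi]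
    have h2 : ∀ j, ∑ i', d j i' * A i' pi qi = d j i := by
      intro j
      rw [Finset.sum_eq_single i]
      · rw [hpqi, mul_one]
      · intro i' _ hne
        rcases hAdisj i' i hne pi qi with h0 | h0
        · rw [h0, mul_zero]
        · rw [hpqi] at h0; norm_num at h0
      · simp
    rw [hpqi] at h1
    simp only [h2] at h1
    exact h1.symm
  -- find the witness j₀
  have hex : ∃ j₀, c j₀ * d j₀ i ≠ 0 := by
    by_contra h
    push_neg at h
    rw [Finset.sum_eq_zero (fun j _ => h j)] at hmsum
    norm_num at hmsum
  obtain ⟨j₀, hj₀⟩ := hex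
  have hcj₀ : c j₀ = 1 := by
    rcases hc01 j₀ with h | h
    · exact absurd (by rw [h, zero_mul]) hj₀
    · exact h
  have hdj₀ : d j₀ i = 1 := by
    rcases hd01 j₀ i with h | h
    · exact absurd (by rw [h, mul_zero]) hj₀
    · exact h
  -- uniqueness: no other index contributes
  have huniq : ∀ j₁, j₁ ≠ j₀ → c j₁ * d j₁ i = 0 := by
    intro j₁ hne
    rcases hterm01 j₁ with h | h
    · exact h
    · exfalso
      have hle : ∑ j ∈ ({j₀, j₁} : Finset (Fin l)), c j * d j i ≤ ∑ j, c j * d j i :=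
        Finset.sum_le_sum_of_subset_of_nonneg (Finset.subset_univ _)
          (fun j _ _ => hterm_nonneg j)
      rw [Finset.sum_pair (Ne.symm hne), hmsum, hcj₀, hdj₀, h] at hle
      norm_num at hle
  refine ⟨j₀, ?_⟩
  ext r s
  rcases hC01 j₀ r s with h0 | h1
  · -- C j₀ r s = 0 : show A i r s = 0
    rw [h0]
    rcases hA01 i r s with hA | hA
    · exact hA
    · exfalso
      have hsum1 : ∑ j, c j * C j r s = 1 := by rw [← hcentry r s, hA]
      have hex1 : ∃ j₁, c j₁ * C j₁ r s ≠ 0 := by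
        by_contra h
        push_neg at h
        rw [Finset.sum_eq_zero (fun j _ => h j)] at hsum1
        norm_num at hsum1
      obtain ⟨j₁, hj₁⟩ := hex1
      have hCj₁ : C j₁ r s = 1 := by
        rcases hC01 j₁ r s with h | h
        · exact absurd (by rw [h, mul_zero]) hj₁
        · exact h
      have hcj₁ : c j₁ = 1 := by
        rcases hc01 j₁ with h | h
        · exact absurd (by rw [h, zero_mul]) hj₁
        · exact h
      have hne : j₁ ≠ j₀ := by
        intro h
        rw [h, h0] at hCj₁
        norm_num at hCj₁
      have hdj₁ : d j₁ i = 1 := by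
        have := hdentry j₁ r s
        rw [hCj₁, Finset.sum_eq_single i] at this
        · rw [hA, mul_one] at this; exact this.symm
        · intro i' _ hne'
          rcases hAdisj i' i hne' r s with h' | h'
          · rw [h', mul_zero]
          · rw [hA] at h'; norm_num at h'
        · simp
      have := huniq j₁ hne
      rw [hcj₁, hdj₁, one_mul] at this
      norm_num at this
  · -- C j₀ r s = 1 : show A i r s = 1
    rw [h1, hcentry r s, Finset.sum_eq_single j₀]
    · rw [h1, hcj₀, one_mul]
    · intro j' _ hne
      rcases hCdisj j' j₀ hne r s with h' | h'
      · rw [h', mul_zero]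
      · rw [h1] at h'; norm_num at h'
    · simp

/-- Proposition 2.1: two homogeneous simple coupled cell networks that are
ODE-equivalent are isomorphic, in terms of their adjacency matrices. -/
theorem stmt_0 {n k l : ℕ}
    (A : Fin k → Matrix (Fin n) (Fin n) ℝ) (B : Fin l → Matrix (Fin n) (Fin n) ℝ)
    (hA0 : ∀ i, A i ≠ 0) (hB0 : ∀ j, B j ≠ 0)
    (hA01 : ∀ i p q, A i p q = 0 ∨ A i p q = 1)
    (hB01 : ∀ j p q, B j p q = 0 ∨ B j p q = 1)
    (hAdiag : ∀ i p, A i p p = 0) (hBdiag : ∀ j p, B j p p = 0)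
    (hAdisj : ∀ i i', i ≠ i' → ∀ p q, A i p q = 0 ∨ A i' p q = 0)
    (hBdisj : ∀ j j', j ≠ j' → ∀ p q, B j p q = 0 ∨ B j' p q = 0)
    (σ : Equiv.Perm (Fin n)) (P : Matrix (Fin n) (Fin n) ℝ)
    (hP : P = Matrix.of fun i j => if σ i = j then (1 : ℝ) else 0)
    (hspan : Submodule.span ℝ (insert (1 : Matrix (Fin n) (Fin n) ℝ) (Set.range A))
      = Submodule.span ℝ (insert (1 : Matrix (Fin n) (Fin n) ℝ)
          (Set.range fun j => Pᵀ * B j * P))) :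
    k = l ∧ ∃ e : Fin k ≃ Fin l, ∀ i, A i = Pᵀ * B (e i) * P := by
  set C : Fin l → Matrix (Fin n) (Fin n) ℝ := fun j => Pᵀ * B j * P with hC
  have hCentry : ∀ j p q, C j p q = B j (σ.symm p) (σ.symm q) := by
    intro j p q
    have hPmul : ∀ (M : Matrix (Fin n) (Fin n) ℝ) p q, (M * P) p q = M p (σ.symm q) := by
      intro M p q
      rw [hP, Matrix.mul_apply]
      have : ∀ b : Fin n, M p b * Matrix.of (fun i j => if σ i = j then (1 : ℝ) else 0) b q
          = if b = σ.symm q then M p b else 0 := by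
        intro b
        simp only [Matrix.of_apply, mul_ite, mul_one, mul_zero]
        congr 1
        simp [eq_comm, Equiv.eq_symm_apply]
      rw [Finset.sum_congr rfl fun b _ => this b]
      simp
    have hmulP : ∀ (M : Matrix (Fin n) (Fin n) ℝ) p q, (Pᵀ * M) p q = M (σ.symm p) q := by
      intro M p q
      rw [hP, Matrix.mul_apply]
      have : ∀ a : Fin n,
          (Matrix.of (fun i j => if σ i = j then (1 : ℝ) else 0))ᵀ p a * M a q
          = if a = σ.symm p then M a q else 0 := by
        intro a
        simp only [Matrix.transpose_apply, Matrix.of_apply, ite_mul, one_mul, zero_mul]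
        congr 1
        simp [eq_comm, Equiv.eq_symm_apply]
      rw [Finset.sum_congr rfl fun a _ => this a]
      simp
    rw [hC]
    simp only []
    rw [hPmul (Pᵀ * B j) p q, hmulP (B j) p (σ.symm q)]
  have hC0 : ∀ j, C j ≠ 0 := by
    intro j h
    obtain ⟨p, q, hpq⟩ := exists_entry_one (B j) (hB0 j) (hB01 j)
    have := hCentry j (σ p) (σ q)
    rw [h] at this
    simp only [Matrix.zero_apply, Equiv.symm_apply_apply] at this
    rw [hpq] at this
    norm_num at this
  have hC01 : ∀ j p q, C j p q = 0 ∨ C j p q = 1 := by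
    intro j p q; rw [hCentry]; exact hB01 j _ _
  have hCdiag : ∀ j p, C j p p = 0 := by
    intro j p; rw [hCentry]; exact hBdiag j _
  have hCdisj : ∀ j j', j ≠ j' → ∀ p q, C j p q = 0 ∨ C j' p q = 0 := by
    intro j j' hne p q; rw [hCentry, hCentry]; exact hBdisj j j' hne _ _
  have hkey₁ := key_lemma A C hA0 hC0 hA01 hC01 hAdiag hCdiag hAdisj hCdisj hspan
  have hkey₂ := key_lemma C A hC0 hA0 hC01 hA01 hCdiag hAdiag hCdisj hAdisj hspan.symm
  choose f hf using hkey₁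
  choose g hg using hkey₂
  have hgf : Function.LeftInverse g f := by
    intro i
    exact family_inj A hA0 hA01 hAdisj (by rw [← hg (f i), ← hf i])
  have hfg : Function.RightInverse g f := by
    intro j
    exact family_inj C hC0 hC01 hCdisj (by rw [← hf (g j), ← hg j])
  let e : Fin k ≃ Fin l := ⟨f, g, hgf, hfg⟩
  exact ⟨Fin.equiv_iff_eq.mp ⟨e⟩, ⟨e, fun i => hf i⟩⟩
end

section
/- Let E₁ and E₂ be directed graphs on the vertex set {1,…,n}, with in-neighbourhoods I₁(c) and I₂(c). Let g : ℝ × Multiset ℝ × Multiset ℝ → ℝ satisfy g(y, p, q) = g(y, q, p) for all y, p, q, and define f : ℝⁿ → ℝⁿ by f_c(x) = g(x_c, ⟦x_d : d ∈ I₁(c)⟧, ⟦x_d : d ∈ I₂(c)⟧). Let γ be a permutation of {1,…,n} such that for every vertex c, either γ maps I₁(c) bijectively onto I₁(γ(c)) and I₂(c) bijectively onto I₂(γ(c)), or γ maps I₁(c) bijectively onto I₂(γ(c)) and I₂(c) bijectively onto I₁(γ(c)). Then f(x ∘ γ) = f(x) ∘ γ for every x ∈ ℝⁿ. (This is Theorem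 4.5, part (2), forward direction, for two edge types: if the bijection γ preserves the input sets as partitions up to the setwise symmetry of g, then f commutes with γ.) -/
lemma aux_filter_perm {n : ℕ} (γ : Equiv.Perm (Fin n)) (P : Fin n → Prop)
    [DecidablePred P] (x : Fin n → ℝ) :
    (Finset.univ.filter (fun d => P (γ d))).val.map (fun d => x (γ d))
      = (Finset.univ.filter P).val.map x := by
  have h : Finset.univ.filter (fun d => P (γ d))
      = (Finset.univ.filter P).map γ.symm.toEmbedding := by
    ext d
    simp [Equiv.eq_symm_apply, eq_comm]
  rw [h]
  simp [Finset.map_val, Multiset.map_map, Function.comp]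

/-- Theorem 4.5(2), forward direction, two edge types: if the permutation γ
preserves the input sets as partitions up to the setwise symmetry of the
generating function g, then the admissible vector field commutes with γ. -/
theorem stmt_7 {n : ℕ} (E₁ E₂ : Fin n → Fin n → Prop)
    [DecidableRel E₁] [DecidableRel E₂]
    (g : ℝ → Multiset ℝ → Multiset ℝ → ℝ)
    (hg : ∀ (y : ℝ) (p q : Multiset ℝ), g y p q = g y q p)
    (f : (Fin n → ℝ) → (Fin n → ℝ))
    (hf : ∀ (x : Fin n → ℝ) (c : Fin n),
      f x c = g (x c) ((Finset.univ.filter (fun d => E₁ d c)).val.map x)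
                      ((Finset.univ.filter (fun d => E₂ d c)).val.map x))
    (γ : Equiv.Perm (Fin n))
    (hγ : ∀ c : Fin n,
      ((∀ d, E₁ d c ↔ E₁ (γ d) (γ c)) ∧ (∀ d, E₂ d c ↔ E₂ (γ d) (γ c))) ∨
      ((∀ d, E₁ d c ↔ E₂ (γ d) (γ c)) ∧ (∀ d, E₂ d c ↔ E₁ (γ d) (γ c)))) :
    ∀ x : Fin n → ℝ, f (fun c => x (γ c)) = fun c => f x (γ c) := by
  intro x
  funext c
  rw [hf, hf]
  rcases hγ c with ⟨h1, h2⟩ | ⟨h1, h2⟩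
  · have e1 : (Finset.univ.filter (fun d => E₁ d c)) =
      (Finset.univ.filter (fun d => E₁ (γ d) (γ c))) := by
      ext d; simp [h1 d]
    have e2 : (Finset.univ.filter (fun d => E₂ d c)) =
      (Finset.univ.filter (fun d => E₂ (γ d) (γ c))) := by
      ext d; simp [h2 d]
    rw [e1, e2, aux_filter_perm γ (fun d => E₁ d (γ c)) x,
      aux_filter_perm γ (fun d => E₂ d (γ c)) x]
  · have e1 : (Finset.univ.filter (fun d => E₁ d c)) =
      (Finset.univ.filter (fun d => E₂ (γ d) (γ c))) := by
      ext d; simp [h1 d]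
    have e2 : (Finset.univ.filter (fun d => E₂ d c)) =
      (Finset.univ.filter (fun d => E₁ (γ d) (γ c))) := by
      ext d; simp [h2 d]
    rw [e1, e2, aux_filter_perm γ (fun d => E₂ d (γ c)) x,
      aux_filter_perm γ (fun d => E₁ d (γ c)) x, hg]
end

section
/- Define the 4×4 real matrices A₁ = [[0,0,1,1],[1,0,1,1],[1,1,0,0],[1,1,1,0]], A₂ = [[0,1,0,0],[0,0,0,0],[0,0,0,1],[0,0,0,0]], B₁ = [[0,0,1,1],[0,0,0,0],[1,1,0,0],[0,0,0,0]], B₂ = [[0,1,0,0],[1,0,1,1],[0,0,0,1],[1,1,1,0]]. Then: (i) the set of all matrices of the form [[t, c, a, a],[b, s, b, b],[a, a, t, c],[b, b, b, s]] with t,s,a,b,c ∈ ℝ equals the set of all matrices of the form [[t, c, a, a],[d, s, d, d],[a, a, t, c],[d, d, d, s]] with t,s,a,c,d ∈ ℝ (so the two networks with adjacency matrices {A₁,A₂} and {B₁,B₂} have the same space of linear admissible maps, i.e., are ODE-equivalent); and (ii) there is no 4×4 permutation matrix P such that (Pᵀ A₁ P = B₁ and Pᵀ A₂ P = B₂) or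 (Pᵀ A₁ P = B₂ and Pᵀ A₂ P = B₁) (so the two networks are not isomorphic). -/
open Matrix

/-- Adjacency matrices of the graph 𝒢₄¹ of Figure 7 (left). -/
def A₁ : Matrix (Fin 4) (Fin 4) ℝ := !![0,0,1,1; 1,0,1,1; 1,1,0,0; 1,1,1,0]
def A₂ : Matrix (Fin 4) (Fin 4) ℝ := !![0,1,0,0; 0,0,0,0; 0,0,0,1; 0,0,0,0]

/-- Adjacency matrices of the graph 𝒢₄² of Figure 7 (right). -/
def B₁ : Matrix (Fin 4) (Fin 4) ℝ := !![0,0,1,1; 0,0,0,0; 1,1,0,0; 0,0,0,0]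
def B₂ : Matrix (Fin 4) (Fin 4) ℝ := !![0,1,0,0; 1,0,1,1; 0,0,0,1; 1,1,1,0]

/-- The permutation matrix of a permutation σ of {1,…,4}. -/
def permMat (σ : Equiv.Perm (Fin 4)) : Matrix (Fin 4) (Fin 4) ℝ :=
  Matrix.of fun i j => if σ i = j then 1 else 0

lemma permMat_conj (σ : Equiv.Perm (Fin 4)) (M : Matrix (Fin 4) (Fin 4) ℝ) :
    (permMat σ)ᵀ * M * permMat σ = M.submatrix σ.symm σ.symm := by
  ext i j
  simp [permMat, Matrix.mul_apply, Matrix.transpose_apply, Finset.sum_ite_eq,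
    eq_comm (a := i), ← Equiv.eq_symm_apply]

lemma sum_permMat_conj (σ : Equiv.Perm (Fin 4)) (M : Matrix (Fin 4) (Fin 4) ℝ) :
    ∑ i, ∑ j, ((permMat σ)ᵀ * M * permMat σ) i j = ∑ i, ∑ j, M i j := by
  rw [permMat_conj]
  have h1 : ∀ i, ∑ j, M i (σ.symm j) = ∑ j, M i j := fun i => Equiv.sum_comp σ.symm (M i)
  simp only [Matrix.submatrix_apply, h1]
  exact Equiv.sum_comp σ.symm (fun i => ∑ j, M i j)

/-- The two networks with adjacency matrices {A₁,A₂} and {B₁,B₂} are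
ODE-equivalent (same space of linear admissible maps) but not isomorphic. -/
theorem stmt_8 :
    ({M : Matrix (Fin 4) (Fin 4) ℝ | ∃ t s a b c : ℝ,
        M = !![t,c,a,a; b,s,b,b; a,a,t,c; b,b,b,s]}
      = {M : Matrix (Fin 4) (Fin 4) ℝ | ∃ t s a c d : ℝ,
        M = !![t,c,a,a; d,s,d,d; a,a,t,c; d,d,d,s]}) ∧
    ¬ ∃ σ : Equiv.Perm (Fin 4),
        ((permMat σ)ᵀ * A₁ * permMat σ = B₁ ∧ (permMat σ)ᵀ * A₂ * permMat σ = B₂) ∨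
        ((permMat σ)ᵀ * A₁ * permMat σ = B₂ ∧ (permMat σ)ᵀ * A₂ * permMat σ = B₁) := by
  constructor
  · ext M
    constructor
    · rintro ⟨t, s, a, b, c, rfl⟩
      exact ⟨t, s, a, c, b, rfl⟩
    · rintro ⟨t, s, a, c, d, rfl⟩
      exact ⟨t, s, a, d, c, rfl⟩
  · rintro ⟨σ, ⟨-, h⟩ | ⟨-, h⟩⟩ <;>
    · have := sum_permMat_conj σ A₂
      rw [h] at this
      norm_num [A₂, B₁, B₂, Fin.sum_univ_succ] at this
end

section
/- Let A be an n×n real matrix, let a, b be real numbers with (a,b) ≠ (0,0), and let N : ℝ² → ℝ² be the linear map N(x,y) = (0, a·x + b·y). Define the linear map T : (ℝ²)ⁿ → (ℝ²)ⁿ by (T v)_i = Σ_{j=1}^{n} A_{ij} · N(v_j). Let ⋈ be an equivalence relation on {1,…,n} and let Θ ⊆ (ℝ²)ⁿ be the polydiagonal subspace {v : v_i = v_j whenever i ⋈ j}. If T(Θ) ⊆ Θ, then the polydiagonal subspace Δ_⋈ = {x ∈ ℝⁿ : x_i = x_j whenever i ⋈ j} of ℝⁿ satisfies A·x ∈ Δ_⋈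 for every x ∈ Δ_⋈. -/
open Matrix

/-- The linear-algebra step of Section 5: invariance of a polydiagonal
subspace of (ℝ²)ⁿ under A ⊗ N transfers to invariance of the corresponding
polydiagonal of ℝⁿ under A. -/
theorem stmt_9 {n : ℕ} (A : Matrix (Fin n) (Fin n) ℝ) (a b : ℝ)
    (hab : (a, b) ≠ ((0 : ℝ), (0 : ℝ)))
    (N : ℝ × ℝ → ℝ × ℝ) (hN : ∀ p : ℝ × ℝ, N p = (0, a * p.1 + b * p.2))
    (T : (Fin n → ℝ × ℝ) → (Fin n → ℝ × ℝ))
    (hT : ∀ (v : Fin n → ℝ × ℝ) (i : Fin n), T v i = ∑ j, A i j • N (v j))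
    (r : Fin n → Fin n → Prop) (hr : Equivalence r)
    (hΘ : ∀ v : Fin n → ℝ × ℝ, (∀ i j, r i j → v i = v j) →
      ∀ i j, r i j → T v i = T v j) :
    ∀ x : Fin n → ℝ, (∀ i j, r i j → x i = x j) →
      ∀ i j, r i j → A.mulVec x i = A.mulVec x j := by
  intro x hx i j hij
  -- choose a nonzero coefficient c and a witness vector
  obtain ⟨c, hc, v, hvconst, hvN⟩ :
      ∃ c : ℝ, c ≠ 0 ∧ ∃ v : Fin n → ℝ × ℝ,
        (∀ i j, r i j → v i = v j) ∧ ∀ k, N (v k) = (0, c * x k) := by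
    by_cases ha : a = 0
    · have hb : b ≠ 0 := by
        intro hb; exact hab (by simp [ha, hb])
      exact ⟨b, hb, fun k => (0, x k), fun i j h => by simp only []; rw [hx i j h],
        fun k => by simp [hN, ha]⟩
    · exact ⟨a, ha, fun k => (x k, 0), fun i j h => by simp only []; rw [hx i j h],
        fun k => by simp [hN]⟩
  have key := hΘ v hvconst i j hij
  rw [hT, hT] at key
  have hsum : ∀ i : Fin n, (∑ k, A i k • N (v k)) =
      (0, c * A.mulVec x i) := by
    intro i
    have : ∀ k, A i k • N (v k) = (0, c * (A i k * x k)) := by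
      intro k
      rw [hvN k]
      simp [Prod.smul_mk]
      ring
    simp only [this]
    rw [Prod.ext_iff, Prod.fst_sum, Prod.snd_sum]
    constructor
    · simp
    · simp [mulVec, dotProduct, Finset.mul_sum]
  rw [hsum i, hsum j] at key
  have := (Prod.ext_iff.mp key).2
  exact mul_left_cancel₀ hc this
end

section
/- Fix real parameters b, ω₀, α₁, α₂, ε, η with (ε, η) ≠ (0, 0). Let F be the coupled van der Pol network vector field on (ℝ²)⁶. Let ⋈ be an equivalence relation on {1,…,6} and let Θ ⊆ (ℝ²)⁶ be the polydiagonal subspace {(x,y) : x_i = x_j and y_i = y_j whenever i ⋈ j}. If F(Θ) ⊆ Θ, then the polydiagonal subspace Δ_⋈ = {x ∈ ℝ⁶ : x_i = x_j whenever i ⋈ j} is A-invariant, where A is the adjacency matrix of G₆. -/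
open Matrix

/-- The adjacency matrix of the ring network G₆ of six cells with nearest and
next-nearest neighbour coupling: `A i j = 1` iff `i - j ≡ ±1, ±2 (mod 6)`. -/
def A6 : Matrix (Fin 6) (Fin 6) ℝ :=
  Matrix.of fun i j =>
    if i - j = 1 ∨ i - j = 2 ∨ j - i = 1 ∨ j - i = 2 then 1 else 0

/-- The coupled van der Pol network vector field on (ℝ²)⁶, equations (5.3). -/
noncomputable def vdP (b ω₀ α₁ α₂ ε η : ℝ) : (Fin 6 → ℝ × ℝ) → (Fin 6 → ℝ × ℝ) :=
  fun z i =>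
    ( (z i).2,
      b * (1 - (z i).1 ^ 2) * (z i).2
        - (ω₀ ^ 2 + α₁ * (z i).1 ^ 2 + α₂ * (z i).1 ^ 4) * (z i).1
        + ε * ((1 / 4) * ((z (i - 2)).2 + (z (i - 1)).2 + (z i).2
            + (z (i + 1)).2 + (z (i + 2)).2) - (z i).2)
        + η * ((1 / 4) * ((z (i - 2)).1 + (z (i - 1)).1 + (z i).1
            + (z (i + 1)).1 + (z (i + 2)).1) - (z i).1) )

lemma A6_mulVec (x : Fin 6 → ℝ) (i : Fin 6) :
    A6.mulVec x i = x (i - 2) + x (i - 1) + x (i + 1) + x (i + 2) := by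
  fin_cases i <;>
    simp (config := { decide := true }) [A6, Matrix.mulVec, dotProduct,
      Fin.sum_univ_six, show ((-1:Fin 6)) = 5 from rfl, show ((-2:Fin 6)) = 4 from rfl] <;>
    ring

/-- If a polydiagonal subspace of (ℝ²)⁶ is invariant under the coupled van der
Pol vector field, then the corresponding polydiagonal Δ_⋈ ⊆ ℝ⁶ is invariant
under the adjacency matrix of G₆. -/
theorem stmt_10 (b ω₀ α₁ α₂ ε η : ℝ) (hεη : (ε, η) ≠ ((0 : ℝ), (0 : ℝ)))
    (r : Fin 6 → Fin 6 → Prop) (hr : Equivalence r)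
    (hF : ∀ z : Fin 6 → ℝ × ℝ, (∀ i j, r i j → z i = z j) →
      ∀ i j, r i j → vdP b ω₀ α₁ α₂ ε η z i = vdP b ω₀ α₁ α₂ ε η z j) :
    ∀ x : Fin 6 → ℝ, (∀ i j, r i j → x i = x j) →
      ∀ i j, r i j → A6.mulVec x i = A6.mulVec x j := by
  intro x hx i j hij
  rw [A6_mulVec, A6_mulVec]
  have hxij : x i = x j := hx i j hij
  by_cases hη : η = 0
  · have hε : ε ≠ 0 := by
      intro hε; exact hεη (by rw [hε, hη])
    set z : Fin 6 → ℝ × ℝ := fun k => ((0 : ℝ), x k) with hz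
    have hzr : ∀ i j, r i j → z i = z j := fun i j h => by
      simp [hz, hx i j h]
    have h2 := congrArg Prod.snd (hF z hzr i j hij)
    simp only [vdP, hz] at h2
    have key : ε * (x (i - 2) + x (i - 1) + x (i + 1) + x (i + 2))
        = ε * (x (j - 2) + x (j - 1) + x (j + 1) + x (j + 2)) := by
      rw [hxij] at h2
      linear_combination 4 * h2
    exact mul_left_cancel₀ hε key
  · set z : Fin 6 → ℝ × ℝ := fun k => (x k, (0 : ℝ)) with hz
    have hzr : ∀ i j, r i j → z i = z j := fun i j h => by
      simp [hz, hx i j h]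
    have h2 := congrArg Prod.snd (hF z hzr i j hij)
    simp only [vdP, hz] at h2
    have key : η * (x (i - 2) + x (i - 1) + x (i + 1) + x (i + 2))
        = η * (x (j - 2) + x (j - 1) + x (j + 1) + x (j + 2)) := by
      rw [hxij] at h2
      linear_combination 4 * h2
    exact mul_left_cancel₀ hη key
end

section
/- Let g : ℝ⁵ → ℝ, written g(y, y₁, y₂, y₃, y₄), be differentiable at the point (a,a,a,a,a) for some a ∈ ℝ, and suppose g is invariant under the interchange y₁ ↔ y₂, under the interchange y₃ ↔ y₄, and under the simultaneous interchange (y₁,y₂) ↔ (y₃,y₄) (i.e., g(y,y₁,y₂,y₃,y₄) = g(y,y₂,y₁,y₃,y₄) = g(y,y₁,y₂,y₄,y₃) = g(y,y₃,y₄,y₁,y₂) for all arguments). Define f : ℝ⁶ → ℝ⁶ by f_i(x) = g(x_i, x_{i−2}, x_{i−1}, x_{i+1}, x_{i+2}) with indices taken mod 6. Then for ν = (a,a,a,a,a,a) ∈ ℝ⁶, the derivative of f at ν equals α·I₆ + c·A, where α is the partial derivative of g with respect to its first argument at (a,a,a,a,a), c is the partial derivative of g with respect to its second argument at (a,a,a,a,a),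 and A is the adjacency matrix of G₆. -/
open Matrix

def G6field (g : (Fin 5 → ℝ) → ℝ) : (Fin 6 → ℝ) → (Fin 6 → ℝ) :=
  fun x i => g ![x i, x (i - 2), x (i - 1), x (i + 1), x (i + 2)]

noncomputable section Aux

def coordCLM {n m : ℕ} (u : Fin m → Fin n) : (Fin n → ℝ) →L[ℝ] (Fin m → ℝ) :=
  ContinuousLinearMap.pi fun k => ContinuousLinearMap.proj (u k)

lemma coordCLM_apply {n m : ℕ} (u : Fin m → Fin n) (x : Fin n → ℝ) (k : Fin m) :
    coordCLM u x k = x (u k) := rfl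

lemma eta5 (x : Fin 5 → ℝ) : x = ![x 0, x 1, x 2, x 3, x 4] := by
  funext k; fin_cases k <;> rfl

lemma clm_expand (l : (Fin 5 → ℝ) →L[ℝ] ℝ) (w : Fin 5 → ℝ) :
    l w = ∑ k, w k * l (Pi.single k (1 : ℝ)) := by
  have hw : w = ∑ k : Fin 5, w k • (Pi.single k (1 : ℝ) : Fin 5 → ℝ) := by
    refine (Finset.univ_sum_single w).symm.trans ?_
    refine Finset.sum_congr rfl fun k _ => ?_
    rw [← Pi.single_smul, smul_eq_mul, mul_one]
  conv_lhs => rw [hw]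
  rw [map_sum]
  simp [smul_eq_mul]

lemma key (g : (Fin 5 → ℝ) → ℝ) (a : ℝ) (hg : DifferentiableAt ℝ g (fun _ => a))
    (e : Fin 5 → Fin 5) (hinv : ∀ x : Fin 5 → ℝ, g x = g (fun k => x (e k)))
    (j k : Fin 5) (hpre : ∀ m, e m = j ↔ m = k) :
    fderiv ℝ g (fun _ => a) (Pi.single j 1) = fderiv ℝ g (fun _ => a) (Pi.single k 1) := by
  have hcomp : g = fun x => g (coordCLM e x) := by
    funext x; exact hinv x
  have h1 : fderiv ℝ g (fun _ => a) = (fderiv ℝ g (fun _ => a)).comp (coordCLM e) := by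
    conv_lhs => rw [hcomp]
    have := fderiv_comp (𝕜 := ℝ) (fun _ => a) hg (coordCLM e).differentiableAt
    rw [(coordCLM e).fderiv] at this
    exact this
  have hσ : coordCLM e (Pi.single j 1) = Pi.single k (1 : ℝ) := by
    funext m
    simp [coordCLM_apply, Pi.single_apply, hpre m]
  conv_lhs => rw [h1]
  rw [ContinuousLinearMap.comp_apply, hσ]

end Aux

/-- The linearization at a fully synchronous point ν = (a,…,a) of the
admissible vector field of G₆ equals α·I₆ + c·A₆, where α = ∂g/∂y(ν) and
c = ∂g/∂y₁(ν). -/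
theorem stmt_15 (g : (Fin 5 → ℝ) → ℝ) (a : ℝ)
    (hg : DifferentiableAt ℝ g (fun _ => a))
    (h12 : ∀ y y1 y2 y3 y4 : ℝ, g ![y, y1, y2, y3, y4] = g ![y, y2, y1, y3, y4])
    (h34 : ∀ y y1 y2 y3 y4 : ℝ, g ![y, y1, y2, y3, y4] = g ![y, y1, y2, y4, y3])
    (hsw : ∀ y y1 y2 y3 y4 : ℝ, g ![y, y1, y2, y3, y4] = g ![y, y3, y4, y1, y2]) :
    DifferentiableAt ℝ (G6field g) (fun _ => a) ∧
    ∀ (v : Fin 6 → ℝ) (i : Fin 6),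
      fderiv ℝ (G6field g) (fun _ => a) v i
        = fderiv ℝ g (fun _ => a) (Pi.single 0 1) * v i
          + fderiv ℝ g (fun _ => a) (Pi.single 1 1) * A6.mulVec v i := by
  set ν6 : Fin 6 → ℝ := fun _ => a with hν6
  -- coordinate maps
  have hcomp : ∀ i : Fin 6, (fun x : Fin 6 → ℝ => G6field g x i)
      = fun x => g (coordCLM ![i, i - 2, i - 1, i + 1, i + 2] x) := by
    intro i; funext x
    show g _ = g _
    congr 1
    funext k; fin_cases k <;> rfl
  have hdiff : ∀ i : Fin 6, DifferentiableAt ℝ (fun x : Fin 6 → ℝ => G6field g x i) ν6 := by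
    intro i
    rw [hcomp i]
    exact hg.comp ν6 (coordCLM _).differentiableAt
  have hDiff : DifferentiableAt ℝ (G6field g) ν6 := differentiableAt_pi.mpr hdiff
  refine ⟨hDiff, ?_⟩
  intro v i
  -- symmetry of partial derivatives
  set l := fderiv ℝ g (fun _ => a) with hl
  have hD12 : l (Pi.single 2 1) = l (Pi.single 1 1) := by
    apply key g a hg ![0, 2, 1, 3, 4]
    · intro x
      rw [eta5 x]
      have : (fun k => (![x 0, x 1, x 2, x 3, x 4]) ((![0, 2, 1, 3, 4] : Fin 5 → Fin 5) k))
          = ![x 0, x 2, x 1, x 3, x 4] := by funext k; fin_cases k <;> rfl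
      rw [this]
      exact h12 _ _ _ _ _
    · decide
  have hD34 : l (Pi.single 4 1) = l (Pi.single 3 1) := by
    apply key g a hg ![0, 1, 2, 4, 3]
    · intro x
      rw [eta5 x]
      have : (fun k => (![x 0, x 1, x 2, x 3, x 4]) ((![0, 1, 2, 4, 3] : Fin 5 → Fin 5) k))
          = ![x 0, x 1, x 2, x 4, x 3] := by funext k; fin_cases k <;> rfl
      rw [this]
      exact h34 _ _ _ _ _
    · decide
  have hD13 : l (Pi.single 1 1) = l (Pi.single 3 1) := by
    apply key g a hg ![0, 3, 4, 1, 2]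
    · intro x
      rw [eta5 x]
      have : (fun k => (![x 0, x 1, x 2, x 3, x 4]) ((![0, 3, 4, 1, 2] : Fin 5 → Fin 5) k))
          = ![x 0, x 3, x 4, x 1, x 2] := by funext k; fin_cases k <;> rfl
      rw [this]
      exact hsw _ _ _ _ _
    · decide
  -- compute the derivative componentwise
  have hfpi : fderiv ℝ (G6field g) ν6 = ContinuousLinearMap.pi
      (fun i => fderiv ℝ (fun x => G6field g x i) ν6) := fderiv_pi hdiff
  have hcompD : fderiv ℝ (fun x => G6field g x i) ν6
      = l.comp (coordCLM ![i, i - 2, i - 1, i + 1, i + 2]) := by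
    rw [hcomp i]
    have := fderiv_comp (𝕜 := ℝ) ν6 hg (coordCLM ![i, i - 2, i - 1, i + 1, i + 2]).differentiableAt
    rw [(coordCLM _).fderiv] at this
    exact this
  have hLHS : fderiv ℝ (G6field g) ν6 v i
      = l (coordCLM ![i, i - 2, i - 1, i + 1, i + 2] v) := by
    rw [hfpi]
    show fderiv ℝ (fun x => G6field g x i) ν6 v = _
    rw [hcompD]; rfl
  rw [hLHS, clm_expand]
  have hA : A6.mulVec v i = v (i - 2) + v (i - 1) + v (i + 1) + v (i + 2) := by
    have hre : A6.mulVec v i = ∑ d : Fin 6, A6 i (i + d) * v (i + d) := by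
      simp only [Matrix.mulVec, dotProduct]
      exact (Fintype.sum_equiv (Equiv.addLeft i)
        (fun d => A6 i (i + d) * v (i + d)) (fun j => A6 i j * v j) (fun d => rfl)).symm
    have hval : ∀ d : Fin 6, A6 i (i + d)
        = if (-d : Fin 6) = 1 ∨ -d = 2 ∨ d = 1 ∨ d = 2 then 1 else 0 := by
      intro d
      simp only [A6, Matrix.of_apply, sub_add_cancel_left, add_sub_cancel_left]
    have h4 : i + 4 = i - 2 := by
      have : (4 : Fin 6) = -2 := by decide
      rw [this, ← sub_eq_add_neg]
    have h5 : i + 5 = i - 1 := by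
      have : (5 : Fin 6) = -1 := by decide
      rw [this, ← sub_eq_add_neg]
    rw [hre, Fin.sum_univ_six, hval 0, hval 1, hval 2, hval 3, hval 4, hval 5,
      if_neg (by decide), if_pos (by decide), if_pos (by decide), if_neg (by decide),
      if_pos (by decide), if_pos (by decide), h4, h5]
    ring
  rw [hA, Fin.sum_univ_five]
  simp only [coordCLM_apply]
  show v i * l (Pi.single 0 1) + v (i - 2) * l (Pi.single 1 1) + v (i - 1) * l (Pi.single 2 1)
      + v (i + 1) * l (Pi.single 3 1) + v (i + 2) * l (Pi.single 4 1) = _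
  rw [hD12, hD34, ← hD13]
  ring
end
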